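/- Every Laplace pairing c : H⊗H → H is a 2-cocycle: it satisfies the 2-cocycle identity (c∘(m⊗id)) ⋆ c₁₂ = c₂₃ ⋆ (c∘(id⊗m)) in Hom_R(H⊗H⊗H, H), where c₁₂(x⊗y⊗z) = ε(z)·c(x⊗y), c₂₃(x⊗y⊗z) = ε(x)·c(y⊗z), and the convolution on Hom_R(H⊗H⊗H, H) is taken with respect to the tensor-product coalgebra structure of H⊗H⊗H. -/

import Mathlib

open TensorProduct

noncomputable section

variable (R H : Type*) [CommRing R] [CommRing H] [Bialgebra R H]

/-- The comultiplication on `H ⊗ H`: `Δ₂ = (id ⊗ sw ⊗ id) ∘ (Δ ⊗ Δ)`. -/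
def comul2 : H ⊗[R] H →ₗ[R] (H ⊗[R] H) ⊗[R] (H ⊗[R] H) :=
  (TensorProduct.tensorTensorTensorComm R H H H H).toLinearMap ∘ₗ
    TensorProduct.map Coalgebra.comul Coalgebra.comul

/-- The comultiplication on `H ⊗ (H ⊗ H)` (tensor-product coalgebra structure). -/
def comul3 : H ⊗[R] (H ⊗[R] H) →ₗ[R] (H ⊗[R] (H ⊗[R] H)) ⊗[R] (H ⊗[R] (H ⊗[R] H)) :=
  (TensorProduct.tensorTensorTensorComm R H H (H ⊗[R] H) (H ⊗[R] H)).toLinearMap ∘ₗ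
    TensorProduct.map Coalgebra.comul (comul2 R H)

/-- Convolution product on `Hom_R(H ⊗ H ⊗ H, H)`. -/
def conv3 (f g : H ⊗[R] (H ⊗[R] H) →ₗ[R] H) : H ⊗[R] (H ⊗[R] H) →ₗ[R] H :=
  LinearMap.mul' R H ∘ₗ TensorProduct.map f g ∘ₗ comul3 R H

/-- `a` is a Laplace pairing: `a(x ⊗ yz) = a(x₍₁₎⊗y)·a(x₍₂₎⊗z)` and
`a(xy ⊗ z) = a(x⊗z₍₁₎)·a(y⊗z₍₂₎)`. -/
def IsLaplace (a : H ⊗[R] H →ₗ[R] H) : Prop :=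
  (a ∘ₗ TensorProduct.map LinearMap.id (LinearMap.mul' R H) =
    LinearMap.mul' R H ∘ₗ TensorProduct.map a a ∘ₗ
      (TensorProduct.tensorTensorTensorComm R H H H H).toLinearMap ∘ₗ
      TensorProduct.map Coalgebra.comul LinearMap.id) ∧
  (a ∘ₗ TensorProduct.map (LinearMap.mul' R H) LinearMap.id =
    LinearMap.mul' R H ∘ₗ TensorProduct.map a a ∘ₗ
      (TensorProduct.tensorTensorTensorComm R H H H H).toLinearMap ∘ₗ
      TensorProduct.map LinearMap.id Coalgebra.comul)

/-- `c ∘ (m ⊗ id)` as a map on `H ⊗ (H ⊗ H)`. -/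
def cM1 (c : H ⊗[R] H →ₗ[R] H) : H ⊗[R] (H ⊗[R] H) →ₗ[R] H :=
  c ∘ₗ TensorProduct.map (LinearMap.mul' R H) LinearMap.id ∘ₗ
    (TensorProduct.assoc R H H H).symm.toLinearMap

/-- `c ∘ (id ⊗ m)` as a map on `H ⊗ (H ⊗ H)`. -/
def cM2 (c : H ⊗[R] H →ₗ[R] H) : H ⊗[R] (H ⊗[R] H) →ₗ[R] H :=
  c ∘ₗ TensorProduct.map LinearMap.id (LinearMap.mul' R H)

/-- `c₁₂(x ⊗ y ⊗ z) = ε(z) • c(x ⊗ y)`. -/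
def c12 (c : H ⊗[R] H →ₗ[R] H) : H ⊗[R] (H ⊗[R] H) →ₗ[R] H :=
  (TensorProduct.rid R H).toLinearMap ∘ₗ TensorProduct.map c Coalgebra.counit ∘ₗ
    (TensorProduct.assoc R H H H).symm.toLinearMap

/-- `c₂₃(x ⊗ y ⊗ z) = ε(x) • c(y ⊗ z)`. -/
def c23 (c : H ⊗[R] H →ₗ[R] H) : H ⊗[R] (H ⊗[R] H) →ₗ[R] H :=
  (TensorProduct.lid R H).toLinearMap ∘ₗ TensorProduct.map Coalgebra.counit c

/-!
In the convolution algebra `Hom_R(H ⊗ H ⊗ H, H)` the two Laplace identities say exactly that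
`c ∘ (m ⊗ id) = c₁₃ ⋆ c₂₃` and `c ∘ (id ⊗ m) = c₁₂ ⋆ c₁₃`, where `c₁₃(x ⊗ y ⊗ z) = ε(y) • c(x ⊗ z)`.
The cocycle identity then reads `(c₁₃ ⋆ c₂₃) ⋆ c₁₂ = c₂₃ ⋆ (c₁₂ ⋆ c₁₃)`, which holds because
convolution of maps from a cocommutative coalgebra into a commutative algebra is commutative
and associative.
-/

open scoped Coalgebra
open WithConv

lemma Coalgebra.sum_counit_right_smul {R A ι : Type*} [CommSemiring R] [AddCommMonoid A]
    [Module R A] [Coalgebra R A] {a : A} (𝓡 : Repr R a ι) :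
    ∑ i ∈ 𝓡.index, counit (R := R) (𝓡.right i) • 𝓡.left i = a := by
  simpa only [map_sum, _root_.TensorProduct.rid_tmul, one_smul]
    using congr(_root_.TensorProduct.rid R A $(sum_tmul_counit_eq (R := R) 𝓡))

section

variable {R H}

def c13 (c : H ⊗[R] H →ₗ[R] H) : H ⊗[R] (H ⊗[R] H) →ₗ[R] H :=
  c ∘ₗ TensorProduct.map LinearMap.id
    ((TensorProduct.lid R H).toLinearMap ∘ₗ TensorProduct.map Coalgebra.counit LinearMap.id)

lemma conv3_eq_convMul (f g : H ⊗[R] (H ⊗[R] H) →ₗ[R] H) :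
    conv3 R H f g = (toConv f * toConv g).ofConv := rfl

lemma conv3_tmul (f g : H ⊗[R] (H ⊗[R] H) →ₗ[R] H) (x y z : H) :
    conv3 R H f g (x ⊗ₜ (y ⊗ₜ z)) = ∑ i ∈ (ℛ R x).index, ∑ j ∈ (ℛ R y).index, ∑ k ∈ (ℛ R z).index,
      f ((ℛ R x).left i ⊗ₜ ((ℛ R y).left j ⊗ₜ (ℛ R z).left k)) *
        g ((ℛ R x).right i ⊗ₜ ((ℛ R y).right j ⊗ₜ (ℛ R z).right k)) := by
  rw [conv3_eq_convMul, ((ℛ R x).tmul ((ℛ R y).tmul (ℛ R z))).convMul_apply]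
  simp [Finset.sum_product]

namespace IsLaplace

variable {c : H ⊗[R] H →ₗ[R] H} (hc : IsLaplace R H c)
include hc

lemma apply_tmul_mul {ι : Type*} {x : H} (𝓧 : Coalgebra.Repr R x ι) (y z : H) :
    c (x ⊗ₜ (y * z)) = ∑ i ∈ 𝓧.index, c (𝓧.left i ⊗ₜ y) * c (𝓧.right i ⊗ₜ z) := by
  simpa [← 𝓧.eq, TensorProduct.sum_tmul] using congr($(hc.1) (x ⊗ₜ (y ⊗ₜ z)))

lemma apply_mul_tmul {ι : Type*} (x y : H) {z : H} (𝓩 : Coalgebra.Repr R z ι) :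
    c ((x * y) ⊗ₜ z) = ∑ k ∈ 𝓩.index, c (x ⊗ₜ 𝓩.left k) * c (y ⊗ₜ 𝓩.right k) := by
  simpa [← 𝓩.eq, TensorProduct.tmul_sum] using congr($(hc.2) ((x ⊗ₜ y) ⊗ₜ z))

lemma cM1_eq_conv3 : cM1 R H c = conv3 R H (c13 c) (c23 R H c) := by
  refine TensorProduct.ext_threefold' fun x y z => ?_
  rw [conv3_tmul]
  conv_lhs =>
    simp only [cM1, LinearMap.comp_apply, LinearEquiv.coe_coe, TensorProduct.assoc_symm_tmul,
      TensorProduct.map_tmul, LinearMap.mul'_apply, LinearMap.id_apply]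
    rw [hc.apply_mul_tmul x y (ℛ R z), ← Coalgebra.sum_counit_right_smul (ℛ R x),
      ← Coalgebra.sum_counit_smul (ℛ R y)]
  simp only [c13, c23, LinearMap.comp_apply, LinearEquiv.coe_coe, TensorProduct.map_tmul,
    LinearMap.id_apply, TensorProduct.lid_tmul, TensorProduct.sum_tmul, TensorProduct.smul_tmul,
    TensorProduct.tmul_smul, map_sum, map_smul, Finset.sum_mul_sum, smul_mul_assoc, mul_smul_comm]
  rw [Finset.sum_comm]
  refine Finset.sum_congr rfl fun i _ => Finset.sum_comm.trans ?_
  exact Finset.sum_congr rfl fun _ _ => Finset.sum_congr rfl fun _ _ => smul_comm _ _ _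

lemma cM2_eq_conv3 : cM2 R H c = conv3 R H (c12 R H c) (c13 c) := by
  refine TensorProduct.ext_threefold' fun x y z => ?_
  rw [conv3_tmul]
  conv_lhs =>
    simp only [cM2, LinearMap.comp_apply, TensorProduct.map_tmul, LinearMap.mul'_apply,
      LinearMap.id_apply]
    rw [hc.apply_tmul_mul (ℛ R x), ← Coalgebra.sum_counit_right_smul (ℛ R y),
      ← Coalgebra.sum_counit_smul (ℛ R z)]
  simp only [c12, c13, LinearMap.comp_apply, LinearEquiv.coe_coe, TensorProduct.assoc_symm_tmul,
    TensorProduct.map_tmul, LinearMap.id_apply, TensorProduct.rid_tmul, TensorProduct.lid_tmul,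
    TensorProduct.tmul_sum, TensorProduct.tmul_smul, map_sum, map_smul, Finset.mul_sum,
    Finset.sum_mul, Finset.smul_sum, smul_mul_assoc, mul_smul_comm]
  refine Finset.sum_congr rfl fun _ _ => Finset.sum_comm.trans ?_
  exact Finset.sum_congr rfl fun _ _ => Finset.sum_congr rfl fun _ _ => smul_comm _ _ _

end IsLaplace

end

/-- Every Laplace pairing is a 2-cocycle:
`(c∘(m⊗id)) ⋆ c₁₂ = c₂₃ ⋆ (c∘(id⊗m))` in `Hom_R(H ⊗ H ⊗ H, H)`. -/
theorem laplace_is_two_cocycle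
    (hcoc : (TensorProduct.comm R H H).toLinearMap ∘ₗ Coalgebra.comul
      = (Coalgebra.comul : H →ₗ[R] H ⊗[R] H))
    (c : H ⊗[R] H →ₗ[R] H) (hc : IsLaplace R H c) :
    conv3 R H (cM1 R H c) (c12 R H c) = conv3 R H (c23 R H c) (cM2 R H c) := by
  have : Coalgebra.IsCocomm R H := ⟨hcoc⟩
  rw [hc.cM1_eq_conv3, hc.cM2_eq_conv3]
  simp only [conv3_eq_convMul, toConv_ofConv]
  congr 1
  ring
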